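/- arXiv:2308.11678 — 3 statements merged into one kernel-verified Lean document; each statement's English description precedes it below -/
import Mathlib

section
/- Let $c > 1$, $T > 0$, and let $\varphi, \psi : [0,T) \to (0,\infty)$ be differentiable functions satisfying $\varphi'(t) \ge \psi(t) > 0$, $\psi'(t) \ge 0$, and $(\varphi'(t))^2 \le \frac{1}{c}\psi'(t)\varphi(t)$ for all $t \in [0,T)$. Then $T \le [(c-1)\psi(0)]^{-1}\varphi(0)$. -/
/-!
The hypotheses give `c ψ φ' ≤ ψ' φ`, i.e. `ψ φ^{-c}` is nondecreasing, so
`φ' ≥ ψ ≥ k φ^c` with `k = ψ(0) φ(0)^{-c}`. For this Bernoulli-type inequality the function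
`φ^{1-c} + (c-1) k t` is nonincreasing; since `φ^{1-c} > 0`, it bounds `(c-1) k t` by
`φ(0)^{1-c}`, which is the claimed bound on `T`.
-/

open Set

lemma monotoneOn_of_forall_hasDerivAt_nonneg {D : Set ℝ} (hD : Convex ℝ D) {f f' : ℝ → ℝ}
    (hf : ∀ x ∈ D, HasDerivAt f (f' x) x) (hf' : ∀ x ∈ D, 0 ≤ f' x) : MonotoneOn f D :=
  monotoneOn_of_hasDerivWithinAt_nonneg hD (fun x hx => (hf x hx).continuousAt.continuousWithinAt)
    (fun x hx => (hf x (interior_subset hx)).hasDerivWithinAt)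
    (fun x hx => hf' x (interior_subset hx))

lemma antitoneOn_of_forall_hasDerivAt_nonpos {D : Set ℝ} (hD : Convex ℝ D) {f f' : ℝ → ℝ}
    (hf : ∀ x ∈ D, HasDerivAt f (f' x) x) (hf' : ∀ x ∈ D, f' x ≤ 0) : AntitoneOn f D :=
  antitoneOn_of_hasDerivWithinAt_nonpos hD (fun x hx => (hf x hx).continuousAt.continuousWithinAt)
    (fun x hx => (hf x (interior_subset hx)).hasDerivWithinAt)
    (fun x hx => hf' x (interior_subset hx))

lemma mul_mul_le_of_le_of_sq_le {c x y u v : ℝ} (hc : 0 < c) (hx : 0 < x) (hxy : x ≤ y)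
    (hy : y ^ 2 ≤ 1 / c * u * v) : c * (x * y) ≤ u * v := by
  have hxy_sq : x * y ≤ y ^ 2 := by nlinarith
  calc c * (x * y) ≤ c * y ^ 2 := by gcongr
    _ ≤ c * (1 / c * u * v) := by gcongr
    _ = u * v := by field_simp

section Concavity

variable {D : Set ℝ} {c : ℝ} {φ ψ φ' ψ' : ℝ → ℝ}

/-- `(ψ φ^{-c})' = φ^{-c-1} (ψ' φ - c ψ φ')`. -/
lemma monotoneOn_mul_rpow_neg (hD : Convex ℝ D) (hφpos : ∀ t ∈ D, 0 < φ t)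
    (hφd : ∀ t ∈ D, HasDerivAt φ (φ' t) t) (hψd : ∀ t ∈ D, HasDerivAt ψ (ψ' t) t)
    (hle : ∀ t ∈ D, c * (ψ t * φ' t) ≤ ψ' t * φ t) :
    MonotoneOn (fun t => ψ t * φ t ^ (-c)) D := by
  refine monotoneOn_of_forall_hasDerivAt_nonneg hD
    (fun t ht => (hψd t ht).mul ((hφd t ht).rpow_const (Or.inl (hφpos t ht).ne'))) ?_
  intro t ht
  have hsplit : φ t ^ (-c) = φ t ^ (-c - 1) * φ t := by
    rw [← Real.rpow_add_one (hφpos t ht).ne', sub_add_cancel]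
  have hpow : 0 < φ t ^ (-c - 1) := Real.rpow_pos_of_pos (hφpos t ht) _
  rw [hsplit]
  nlinarith [mul_nonneg hpow.le (sub_nonneg.mpr (hle t ht))]

lemma sub_le_of_rpow_le_deriv {a b k : ℝ} (hab : a < b) (hc : 1 < c) (hk : 0 < k)
    (hφpos : ∀ t ∈ Ico a b, 0 < φ t) (hφd : ∀ t ∈ Ico a b, HasDerivAt φ (φ' t) t)
    (hgrowth : ∀ t ∈ Ico a b, k * φ t ^ c ≤ φ' t) :
    b - a ≤ φ a ^ (1 - c) / ((c - 1) * k) := by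
  have hck : 0 < (c - 1) * k := mul_pos (by linarith) hk
  have ha : a ∈ Ico a b := ⟨le_rfl, hab⟩
  have hanti : AntitoneOn (fun t => φ t ^ (1 - c) + (c - 1) * k * t) (Ico a b) := by
    refine antitoneOn_of_forall_hasDerivAt_nonpos (convex_Ico a b) (fun t ht =>
      ((hφd t ht).rpow_const (Or.inl (hφpos t ht).ne')).add ((hasDerivAt_id t).const_mul _))
      ?_
    intro t ht
    have hpow : 0 < φ t ^ c := Real.rpow_pos_of_pos (hφpos t ht) c
    have hk_le : k ≤ φ' t * φ t ^ (-c) := by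
      rw [Real.rpow_neg (hφpos t ht).le, ← div_eq_mul_inv, le_div_iff₀ hpow]
      exact hgrowth t ht
    have hexp : 1 - c - 1 = -c := by ring
    rw [hexp]
    nlinarith
  by_contra! hlt
  set X := φ a ^ (1 - c) / ((c - 1) * k)
  have hX : 0 < X := div_pos (Real.rpow_pos_of_pos (hφpos a ha) _) hck
  have hbound := hanti ha ⟨by linarith, by linarith⟩ (le_add_of_nonneg_right hX.le)
  have hpos : 0 < φ (a + X) ^ (1 - c) := Real.rpow_pos_of_pos (hφpos _ ⟨by linarith, by linarith⟩) _
  have hX_eq : (c - 1) * k * X = φ a ^ (1 - c) := mul_div_cancel₀ _ hck.ne'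
  simp only at hbound
  linarith

end Concavity

theorem stmt2_general (c T : ℝ) (hc : 1 < c) (hT : 0 < T)
    (φ ψ φ' ψ' : ℝ → ℝ)
    (hφpos : ∀ t ∈ Ico (0:ℝ) T, 0 < φ t)
    (hψpos : ∀ t ∈ Ico (0:ℝ) T, 0 < ψ t)
    (hφd : ∀ t ∈ Ico (0:ℝ) T, HasDerivAt φ (φ' t) t)
    (hψd : ∀ t ∈ Ico (0:ℝ) T, HasDerivAt ψ (ψ' t) t)
    (h1 : ∀ t ∈ Ico (0:ℝ) T, ψ t ≤ φ' t)
    (h3 : ∀ t ∈ Ico (0:ℝ) T, (φ' t) ^ 2 ≤ (1 / c) * ψ' t * φ t) :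
    T ≤ ((c - 1) * ψ 0)⁻¹ * φ 0 := by
  have h0 : (0:ℝ) ∈ Ico 0 T := ⟨le_rfl, hT⟩
  have hφ0 := hφpos 0 h0
  set k := ψ 0 * φ 0 ^ (-c) with hk_def
  have hk : 0 < k := mul_pos (hψpos 0 h0) (Real.rpow_pos_of_pos hφ0 _)
  have hmono := monotoneOn_mul_rpow_neg (convex_Ico 0 T) hφpos hφd hψd fun t ht =>
    mul_mul_le_of_le_of_sq_le (by linarith) (hψpos t ht) (h1 t ht) (h3 t ht)
  have hgrowth : ∀ t ∈ Ico 0 T, k * φ t ^ c ≤ φ' t := fun t ht =>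
    calc k * φ t ^ c ≤ ψ t * φ t ^ (-c) * φ t ^ c :=
          mul_le_mul_of_nonneg_right (hmono h0 ht ht.1) (Real.rpow_nonneg (hφpos t ht).le c)
      _ = ψ t := by
        rw [Real.rpow_neg (hφpos t ht).le, mul_assoc,
          inv_mul_cancel₀ (Real.rpow_pos_of_pos (hφpos t ht) c).ne', mul_one]
      _ ≤ φ' t := h1 t ht
  calc T = T - 0 := (sub_zero T).symm
    _ ≤ φ 0 ^ (1 - c) / ((c - 1) * k) := sub_le_of_rpow_le_deriv hT hc hk hφpos hφd hgrowth
    _ = ((c - 1) * ψ 0)⁻¹ * φ 0 := by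
      rw [sub_eq_add_neg, Real.rpow_add hφ0, Real.rpow_one, hk_def]
      field_simp

/-- Abstract ODE blow-up lemma (concavity method): if `φ' ≥ ψ > 0`, `ψ' ≥ 0` and
`(φ')^2 ≤ (1/c) ψ' φ` on `[0,T)` with `c > 1`, then `T ≤ [(c-1)ψ(0)]⁻¹ φ(0)`. -/
theorem stmt2 (c T : ℝ) (hc : 1 < c) (hT : 0 < T)
    (φ ψ φ' ψ' : ℝ → ℝ)
    (hφpos : ∀ t ∈ Ico (0:ℝ) T, 0 < φ t)
    (hψpos : ∀ t ∈ Ico (0:ℝ) T, 0 < ψ t)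
    (hφd : ∀ t ∈ Ico (0:ℝ) T, HasDerivAt φ (φ' t) t)
    (hψd : ∀ t ∈ Ico (0:ℝ) T, HasDerivAt ψ (ψ' t) t)
    (h1 : ∀ t ∈ Ico (0:ℝ) T, ψ t ≤ φ' t)
    (h2 : ∀ t ∈ Ico (0:ℝ) T, 0 ≤ ψ' t)
    (h3 : ∀ t ∈ Ico (0:ℝ) T, (φ' t) ^ 2 ≤ (1 / c) * ψ' t * φ t) :
    T ≤ ((c - 1) * ψ 0)⁻¹ * φ 0 :=
  stmt2_general c T hc hT φ ψ φ' ψ' hφpos hψpos hφd hψd h1 h3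
end

section
/- Let $a : \mathbb{R} \to \mathbb{R}$ be $C^1$ with $a' \ge 0$, let $A(u) = \int_0^u a(s)\,ds + C_0$ be positive, and suppose $a(u)^2 \le k^2 a'(u) A(u)$ for all $u$, with $0 < k < \sqrt{2}$. Then for any sufficiently smooth function $u(\cdot,t)$ on a bounded domain $\Omega$, setting $\varphi(t) = \int_\Omega A(u(x,t))\,dx$, one has $\varphi'(t)^2 \le \frac{k^2}{2}\cdot\left(2\int_\Omega a'(u)|u_t|^2\,dx\right)\cdot \varphi(t)$. -/
/-!
Write `a(u) u_t = (√(a'(u)) u_t) · (a(u) / √(a'(u)))`. The hypothesis `a(u)² ≤ k² a'(u) A(u)`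
bounds the square of the second factor by `k² A(u)` (where `a'(u) = 0` it forces `a(u) = 0`,
so both sides of the factorisation vanish), and Cauchy–Schwarz on `Ω` finishes the proof.
-/

open MeasureTheory Set

theorem Continuous.integrableOn_of_isBounded {X E : Type*} [MetricSpace X] [ProperSpace X]
    [MeasurableSpace X] [OpensMeasurableSpace X] {μ : Measure X} [IsFiniteMeasureOnCompacts μ]
    [NormedAddCommGroup E] {f : X → E} (hf : Continuous f) {s : Set X}
    (hs : Bornology.IsBounded s) : IntegrableOn f s μ :=
  (hf.continuousOn.integrableOn_compact hs.isCompact_closure).mono_set subset_closure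

section CauchySchwarz

variable {α : Type*} [MeasurableSpace α] {μ : Measure α}

theorem MemLp.inner_toLp_eq_integral_mul {f g : α → ℝ} (hf : MemLp f 2 μ) (hg : MemLp g 2 μ) :
    inner ℝ (hf.toLp f) (hg.toLp g) = ∫ x, f x * g x ∂μ := by
  rw [L2.inner_def]
  refine integral_congr_ae ?_
  filter_upwards [hf.coeFn_toLp, hg.coeFn_toLp] with x hfx hgx
  rw [hfx, hgx, real_inner_eq_re_inner, RCLike.inner_apply]
  simp [mul_comm]

theorem sq_integral_mul_le {f g : α → ℝ} (hf : MemLp f 2 μ) (hg : MemLp g 2 μ) :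
    (∫ x, f x * g x ∂μ) ^ 2 ≤ (∫ x, f x ^ 2 ∂μ) * ∫ x, g x ^ 2 ∂μ := by
  simpa only [MemLp.inner_toLp_eq_integral_mul, sq] using
    real_inner_mul_inner_self_le (hf.toLp f) (hg.toLp g)

end CauchySchwarz

section WeightedCauchySchwarz

theorem sqrt_mul_mul_div_sqrt {w c B : ℝ} (hw : 0 ≤ w) (hc : c ^ 2 ≤ w * B) (v : ℝ) :
    √w * v * (c / √w) = c * v := by
  rcases hw.eq_or_lt with rfl | hw
  · have : c = 0 := by simpa using hc
    simp [this]
  · have : √w ≠ 0 := by positivity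
    field_simp

theorem div_sqrt_sq_le {w c B : ℝ} (hB : 0 ≤ B) (hc : c ^ 2 ≤ w * B) : (c / √w) ^ 2 ≤ B := by
  rcases le_or_gt w 0 with hw | hw
  · simpa [Real.sqrt_eq_zero'.mpr hw] using hB
  · rw [div_pow, Real.sq_sqrt hw.le, div_le_iff₀ hw]
    linarith

variable {α : Type*} [MeasurableSpace α] {μ : Measure α}

theorem sq_integral_mul_le_of_sq_le_mul {c w v B : α → ℝ} (hw : ∀ x, 0 ≤ w x)
    (hB : ∀ x, 0 ≤ B x) (hcwB : ∀ x, c x ^ 2 ≤ w x * B x) (hc : AEStronglyMeasurable c μ)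
    (hwm : AEStronglyMeasurable w μ) (hv : AEStronglyMeasurable v μ)
    (hwv : Integrable (fun x ↦ w x * v x ^ 2) μ) (hBi : Integrable B μ) :
    (∫ x, c x * v x ∂μ) ^ 2 ≤ (∫ x, w x * v x ^ 2 ∂μ) * ∫ x, B x ∂μ := by
  set f := fun x ↦ √(w x) * v x
  set g := fun x ↦ c x / √(w x)
  have hf_sq : ∀ x, f x ^ 2 = w x * v x ^ 2 := fun x ↦ by
    simp only [f, mul_pow, Real.sq_sqrt (hw x)]
  have hsqrt : AEStronglyMeasurable (fun x ↦ √(w x)) μ :=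
    Real.continuous_sqrt.comp_aestronglyMeasurable hwm
  have hf : MemLp f 2 μ := by
    refine (memLp_two_iff_integrable_sq (f := f) (hsqrt.mul hv)).mpr ?_
    simpa only [hf_sq] using hwv
  have hgm : AEStronglyMeasurable g μ :=
    (hc.aemeasurable.div hsqrt.aemeasurable).aestronglyMeasurable
  have hg_sq : Integrable (fun x ↦ g x ^ 2) μ :=
    hBi.mono' (hgm.pow 2) (.of_forall fun x ↦ by
      simpa only [Real.norm_of_nonneg (sq_nonneg _)] using div_sqrt_sq_le (hB x) (hcwB x))
  have hg : MemLp g 2 μ := (memLp_two_iff_integrable_sq hgm).mpr hg_sq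
  calc (∫ x, c x * v x ∂μ) ^ 2 = (∫ x, f x * g x ∂μ) ^ 2 := by
        simp only [f, g, sqrt_mul_mul_div_sqrt (hw _) (hcwB _)]
    _ ≤ (∫ x, f x ^ 2 ∂μ) * ∫ x, g x ^ 2 ∂μ := sq_integral_mul_le hf hg
    _ ≤ (∫ x, w x * v x ^ 2 ∂μ) * ∫ x, B x ∂μ := by
        simp only [hf_sq]
        exact mul_le_mul_of_nonneg_left
          (integral_mono hg_sq hBi fun x ↦ div_sqrt_sq_le (hB x) (hcwB x))
          (integral_nonneg fun x ↦ mul_nonneg (hw x) (sq_nonneg _))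

end WeightedCauchySchwarz

theorem stmt3_general (N : ℕ) (Ω : Set (EuclideanSpace ℝ (Fin N))) (hΩb : Bornology.IsBounded Ω)
    (a : ℝ → ℝ) (ha : ContDiff ℝ 1 a) (ha' : ∀ s, 0 ≤ deriv a s)
    (C0 k : ℝ)
    (A : ℝ → ℝ) (hA : ∀ u, A u = (∫ s in (0:ℝ)..u, a s) + C0)
    (hApos : ∀ u, 0 < A u)
    (hcond : ∀ u, a u ^ 2 ≤ k ^ 2 * deriv a u * A u) :
    ∀ u ut : EuclideanSpace ℝ (Fin N) → ℝ, Continuous u → Continuous ut →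
      (∫ x in Ω, a (u x) * ut x) ^ 2 ≤
        (k ^ 2 / 2) * (2 * ∫ x in Ω, deriv a (u x) * (ut x) ^ 2) * (∫ x in Ω, A (u x)) := by
  intro u ut hu hut
  have ha'_cont : Continuous (deriv a) := ha.continuous_deriv le_rfl
  have hA_cont : Continuous A := by
    rw [funext hA]
    exact (intervalIntegral.continuous_primitive
      (fun _ _ ↦ ha.continuous.intervalIntegrable _ _) 0).add continuous_const
  have key := sq_integral_mul_le_of_sq_le_mul (μ := volume.restrict Ω)
    (B := fun x ↦ k ^ 2 * A (u x)) (fun x ↦ ha' (u x))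
    (fun x ↦ mul_nonneg (sq_nonneg k) (hApos (u x)).le)
    (fun x ↦ (hcond (u x)).trans_eq (by ring))
    (ha.continuous.comp hu).aestronglyMeasurable (ha'_cont.comp hu).aestronglyMeasurable
    hut.aestronglyMeasurable
    (((ha'_cont.comp hu).mul (hut.pow 2)).integrableOn_of_isBounded hΩb)
    ((continuous_const.mul (hA_cont.comp hu)).integrableOn_of_isBounded hΩb)
  rw [integral_const_mul] at key
  linarith

/-- Cauchy–Schwarz step of the concavity method: if `a' ≥ 0`, `A` is a positive
potential of `a` and `a(u)^2 ≤ k^2 a'(u) A(u)`, then for `φ(t) = ∫ A(u)` one has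
`(φ')^2 = (∫ a(u) u_t)^2 ≤ (k^2/2) (2 ∫ a'(u)|u_t|^2) φ`. -/
theorem stmt3 (N : ℕ) (Ω : Set (EuclideanSpace ℝ (Fin N))) (hΩb : Bornology.IsBounded Ω)
    (a : ℝ → ℝ) (ha : ContDiff ℝ 1 a) (ha' : ∀ s, 0 ≤ deriv a s)
    (C0 k : ℝ) (hk0 : 0 < k) (hk : k < Real.sqrt 2)
    (A : ℝ → ℝ) (hA : ∀ u, A u = (∫ s in (0:ℝ)..u, a s) + C0)
    (hApos : ∀ u, 0 < A u)
    (hcond : ∀ u, a u ^ 2 ≤ k ^ 2 * deriv a u * A u) :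
    ∀ u ut : EuclideanSpace ℝ (Fin N) → ℝ, Continuous u → Continuous ut →
      (∫ x in Ω, a (u x) * ut x) ^ 2 ≤
        (k ^ 2 / 2) * (2 * ∫ x in Ω, deriv a (u x) * (ut x) ^ 2) * (∫ x in Ω, A (u x)) :=
  stmt3_general N Ω hΩb a ha ha' C0 k A hA hApos hcond
end

section
/- (Slicing BMO estimate.) Let $W \in C^1$ on $Q = B_R \times (0,R) \subset \mathbb{R}^2 \times \mathbb{R}$, suppose for some $s \in (0,R)$ and $\varepsilon > 0$ that $\frac{1}{R^2}\int_{B_R}|W(x,s) - W_{B_R}|\,dx \le \varepsilon$ and $\int_0^R \int_{B_R} |D_{x_3}W(x,x_3)|^2\,dx\,dx_3 \le \varepsilon R$. Then $\frac{1}{R^3}\int_Q |W - W_Q|\,dz \le C(\sqrt{\varepsilon} + \varepsilon)$ for a universal constant $C$, where $W_Q$ and $W_{B_R}$ denote mean values over $Q$ and $B_R$ respectively. -/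
/-!
By the fundamental theorem of calculus in `x₃`, `|W(x,x₃) - W(x,s)| ≤ ∫₀^R |∂₃W(x,t)| dt`.
Integrating over `Q`, the oscillation of `W` around the slice mean `a = W_{B_R}(s)` is at most
`R` times the slice oscillation plus `R ∫_Q |∂₃W|`, and Cauchy–Schwarz bounds `∫_Q |∂₃W|` by
`√|Q| · √(εR) = √π √ε R²`. Replacing `a` by the mean `W_Q` costs at most a factor `2`.
-/

open MeasureTheory Set

section FiniteMeasure

variable {α E : Type*} [MeasurableSpace α] {μ : Measure α} [IsFiniteMeasure μ]
  [NormedAddCommGroup E]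

theorem integral_norm_le_sqrt_measureReal_mul_sqrt {f : α → E} (hf : MemLp f 2 μ) :
    ∫ x, ‖f x‖ ∂μ ≤ √(μ.real univ) * √(∫ x, ‖f x‖ ^ 2 ∂μ) := by
  have hholder := integral_mul_norm_le_Lp_mul_Lq Real.HolderConjugate.two_two
    (f := fun _ => (1 : ℝ)) (g := fun x => ‖f x‖) (μ := μ) (by simpa using memLp_const (1 : ℝ))
    (by simpa using hf.norm)
  simpa [Real.sqrt_eq_rpow] using hholder

variable [NormedSpace ℝ E] [CompleteSpace E]

theorem integral_norm_sub_average_le_two_mul {f : α → E} (hf : Integrable f μ) (c : E) :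
    ∫ x, ‖f x - ⨍ y, f y ∂μ‖ ∂μ ≤ 2 * ∫ x, ‖f x - c‖ ∂μ := by
  have hfc : Integrable (fun x => ‖f x - c‖) μ := (hf.sub (integrable_const c)).norm
  have hmean : μ.real univ * ‖c - ⨍ y, f y ∂μ‖ ≤ ∫ x, ‖f x - c‖ ∂μ :=
    calc μ.real univ * ‖c - ⨍ y, f y ∂μ‖ = ‖∫ x, (c - f x) ∂μ‖ := by
          rw [integral_sub (integrable_const c) hf, integral_const, ← measure_smul_average,
            ← smul_sub, norm_smul, Real.norm_of_nonneg measureReal_nonneg]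
      _ ≤ ∫ x, ‖c - f x‖ ∂μ := norm_integral_le_integral_norm _
      _ = ∫ x, ‖f x - c‖ ∂μ := by simp_rw [norm_sub_rev]
  calc ∫ x, ‖f x - ⨍ y, f y ∂μ‖ ∂μ ≤ ∫ x, (‖f x - c‖ + ‖c - ⨍ y, f y ∂μ‖) ∂μ :=
        integral_mono_of_nonneg (ae_of_all _ fun _ => norm_nonneg _)
          (hfc.add (integrable_const _))
          (ae_of_all _ fun _ => norm_sub_le_norm_sub_add_norm_sub _ _ _)
    _ = ∫ x, ‖f x - c‖ ∂μ + μ.real univ * ‖c - ⨍ y, f y ∂μ‖ := by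
        rw [integral_add hfc (integrable_const _), integral_const, smul_eq_mul]
    _ ≤ 2 * ∫ x, ‖f x - c‖ ∂μ := by linarith

end FiniteMeasure

section Slicing

variable {E : Type*} [NormedAddCommGroup E] [NormedSpace ℝ E] [CompleteSpace E]

theorem norm_sub_le_setIntegral_norm_deriv {g g' : ℝ → E} {a b s t : ℝ}
    (hg : ∀ τ ∈ Ioo a b, HasDerivAt g (g' τ) τ) (hg' : IntegrableOn g' (Ioo a b))
    (hs : s ∈ Ioo a b) (ht : t ∈ Ioo a b) :
    ‖g t - g s‖ ≤ ∫ τ in Ioo a b, ‖g' τ‖ := by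
  have hst : uIcc s t ⊆ Ioo a b := ordConnected_Ioo.uIcc_subset hs ht
  calc ‖g t - g s‖ = ‖∫ τ in s..t, g' τ‖ := by
        rw [intervalIntegral.integral_eq_sub_of_hasDerivAt (fun τ hτ => hg τ (hst hτ))
          (hg'.mono_set hst).intervalIntegrable]
    _ ≤ ∫ τ in uIoc s t, ‖g' τ‖ := intervalIntegral.norm_integral_le_integral_norm_uIoc
    _ ≤ ∫ τ in Ioo a b, ‖g' τ‖ :=
        setIntegral_mono_set hg'.norm (ae_of_all _ fun _ => norm_nonneg _)
          (uIoc_subset_uIcc.trans hst).eventuallyLE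

variable {α : Type*} [MeasurableSpace α] {μ : Measure α} [IsFiniteMeasure μ]

theorem integral_norm_sub_le_slice_add_deriv {F F' : α → ℝ → E} {a b s : ℝ} (c : E)
    (hF : ∀ x, ∀ t ∈ Ioo a b, HasDerivAt (F x) (F' x t) t)
    (hF' : Integrable (fun p : α × ℝ => F' p.1 p.2) (μ.prod (volume.restrict (Ioo a b))))
    (hFs : Integrable (fun x => F x s) μ) (hs : s ∈ Ioo a b) :
    ∫ p, ‖F p.1 p.2 - c‖ ∂μ.prod (volume.restrict (Ioo a b)) ≤
      (b - a) * (∫ p, ‖F' p.1 p.2‖ ∂μ.prod (volume.restrict (Ioo a b)) +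
        ∫ x, ‖F x s - c‖ ∂μ) := by
  set ν := volume.restrict (Ioo a b)
  have hF'x : Integrable (fun x => ∫ t, ‖F' x t‖ ∂ν) μ := hF'.integral_norm_prod_left
  have hFsc : Integrable (fun x => ‖F x s - c‖) μ := (hFs.sub (integrable_const c)).norm
  set g : α → ℝ := fun x => ∫ t, ‖F' x t‖ ∂ν + ‖F x s - c‖
  have hbound : ∀ᵐ p ∂μ.prod ν, ‖F p.1 p.2 - c‖ ≤ g p.1 := by
    filter_upwards [Measure.quasiMeasurePreserving_fst.ae hF'.prod_right_ae,
      Measure.quasiMeasurePreserving_snd.ae (ae_restrict_mem measurableSet_Ioo)] with p hp ht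
    calc ‖F p.1 p.2 - c‖ ≤ ‖F p.1 p.2 - F p.1 s‖ + ‖F p.1 s - c‖ :=
          norm_sub_le_norm_sub_add_norm_sub _ _ _
      _ ≤ g p.1 := add_le_add_left (norm_sub_le_setIntegral_norm_deriv (hF p.1) hp hs ht) _
  have hν : ν.real univ = b - a := by simp [ν, (hs.1.trans hs.2).le]
  calc ∫ p, ‖F p.1 p.2 - c‖ ∂μ.prod ν ≤ ∫ p, g p.1 ∂μ.prod ν :=
        integral_mono_of_nonneg (ae_of_all _ fun _ => norm_nonneg _)
          ((hF'x.add hFsc).comp_fst ν) hbound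
    _ = (b - a) * (∫ p, ‖F' p.1 p.2‖ ∂μ.prod ν + ∫ x, ‖F x s - c‖ ∂μ) := by
        rw [integral_fun_fst, hν, smul_eq_mul, integral_add hF'x hFsc,
          integral_prod _ hF'.norm]

end Slicing

section ContDiffSlice

variable {X E : Type*} [NormedAddCommGroup X] [NormedSpace ℝ X] [NormedAddCommGroup E]
  [NormedSpace ℝ E] {f : X × ℝ → E}

theorem ContDiff.hasDerivAt_slice (hf : ContDiff ℝ 1 f) (x : X) (t : ℝ) :
    HasDerivAt (fun τ => f (x, τ)) (fderiv ℝ f (x, t) (0, 1)) t :=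
  (hf.differentiable one_ne_zero (x, t)).hasFDerivAt.comp_hasDerivAt t
    ((hasDerivAt_const t x).prodMk (hasDerivAt_id t))

theorem ContDiff.continuous_deriv_slice (hf : ContDiff ℝ 1 f) :
    Continuous fun p : X × ℝ => deriv (fun τ => f (p.1, τ)) p.2 := by
  simp_rw [(hf.hasDerivAt_slice _ _).deriv]
  exact (hf.continuous_fderiv one_ne_zero).clm_apply continuous_const

end ContDiffSlice

theorem Continuous.integrable_prod_restrict_ball_Ioo {X E : Type*} [MetricSpace X]
    [ProperSpace X] [MeasurableSpace X] [BorelSpace X] [NormedAddCommGroup E] {μ : Measure X}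
    [IsFiniteMeasureOnCompacts μ] {g : X × ℝ → E} (hg : Continuous g) (x : X) (r a b : ℝ) :
    Integrable g ((μ.restrict (Metric.ball x r)).prod (volume.restrict (Ioo a b))) := by
  rw [Measure.prod_restrict]
  exact (hg.continuousOn.integrableOn_compact
    ((isCompact_closedBall x r).prod isCompact_Icc)).mono_set
    (prod_mono Metric.ball_subset_closedBall Ioo_subset_Icc_self)

section Cylinder

open Metric

noncomputable def cylinderMeasure (R : ℝ) : Measure (EuclideanSpace ℝ (Fin 2) × ℝ) :=
  (volume.restrict (ball 0 R)).prod (volume.restrict (Ioo 0 R))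

instance (R : ℝ) : IsFiniteMeasure (volume.restrict (ball (0 : EuclideanSpace ℝ (Fin 2)) R)) :=
  isFiniteMeasure_restrict.2 measure_ball_lt_top.ne

instance (R : ℝ) : IsFiniteMeasure (cylinderMeasure R) := by
  have : IsFiniteMeasure (volume.restrict (Ioo (0 : ℝ) R)) :=
    isFiniteMeasure_restrict.2 measure_Ioo_lt_top.ne
  unfold cylinderMeasure
  infer_instance

theorem cylinderMeasure_real_univ {R : ℝ} (hR : 0 ≤ R) :
    (cylinderMeasure R).real univ = Real.pi * R ^ 3 := by
  rw [cylinderMeasure, ← univ_prod_univ, measureReal_prod_prod]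
  simp only [measureReal_def, Measure.restrict_apply_univ, EuclideanSpace.volume_ball_fin_two,
    Real.volume_Ioo, sub_zero, ENNReal.toReal_mul, ENNReal.toReal_pow, ENNReal.toReal_ofReal hR,
    ENNReal.toReal_ofReal Real.pi_pos.le]
  ring

theorem Continuous.integrable_cylinderMeasure {F : Type*} [NormedAddCommGroup F]
    {g : EuclideanSpace ℝ (Fin 2) × ℝ → F} (hg : Continuous g) (R : ℝ) :
    Integrable g (cylinderMeasure R) :=
  hg.integrable_prod_restrict_ball_Ioo 0 R 0 R

theorem integral_cylinderMeasure {F : Type*} [NormedAddCommGroup F] [NormedSpace ℝ F]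
    {g : EuclideanSpace ℝ (Fin 2) → ℝ → F}
    (hg : Continuous fun p : EuclideanSpace ℝ (Fin 2) × ℝ => g p.1 p.2) (R : ℝ) :
    ∫ t in Ioo 0 R, ∫ x in ball 0 R, g x t = ∫ p, g p.1 p.2 ∂cylinderMeasure R :=
  (integral_prod_symm (fun p => g p.1 p.2) (hg.integrable_cylinderMeasure R)).symm

theorem integral_norm_le_of_integral_sq_le_cylinderMeasure {F : Type*} [NormedAddCommGroup F]
    {g : EuclideanSpace ℝ (Fin 2) × ℝ → F} (hg : Continuous g) {R ε : ℝ} (hR : 0 ≤ R)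
    (h : ∫ p, ‖g p‖ ^ 2 ∂cylinderMeasure R ≤ ε * R) :
    ∫ p, ‖g p‖ ∂cylinderMeasure R ≤ √Real.pi * √ε * R ^ 2 :=
  calc _ ≤ √((cylinderMeasure R).real univ) * √(∫ p, ‖g p‖ ^ 2 ∂cylinderMeasure R) :=
        integral_norm_le_sqrt_measureReal_mul_sqrt ((memLp_two_iff_integrable_sq_norm
          hg.aestronglyMeasurable).2 (hg.norm.pow 2 |>.integrable_cylinderMeasure R))
    _ ≤ √(Real.pi * R ^ 3) * √(ε * R) := by
        rw [cylinderMeasure_real_univ hR]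
        gcongr
    _ = √(Real.pi * ε * (R ^ 2) ^ 2) := by rw [← Real.sqrt_mul (by positivity)]; ring_nf
    _ = √Real.pi * √ε * R ^ 2 := by
        rw [Real.sqrt_mul' _ (by positivity), Real.sqrt_sq (by positivity),
          Real.sqrt_mul Real.pi_pos.le]

end Cylinder

/-- Slicing BMO estimate on a cylinder `Q = B_R × (0,R) ⊂ ℝ² × ℝ`: if the mean
oscillation of `W` on one slice is at most `ε` and the vertical Dirichlet energy is
at most `εR`, then the mean oscillation of `W` over `Q` is at most `C(√ε + ε)`. -/
theorem stmt15 :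
    ∃ C > (0:ℝ), ∀ (m : ℕ) (R s ε : ℝ), 0 < R → s ∈ Ioo (0:ℝ) R → 0 < ε →
    ∀ W : EuclideanSpace ℝ (Fin 2) → ℝ → EuclideanSpace ℝ (Fin m),
    ContDiff ℝ 1 (fun p : EuclideanSpace ℝ (Fin 2) × ℝ => W p.1 p.2) →
    (1 / R ^ 2) * (∫ x in Metric.ball (0 : EuclideanSpace ℝ (Fin 2)) R,
        ‖W x s - (Real.pi * R ^ 2)⁻¹ •
          (∫ y in Metric.ball (0 : EuclideanSpace ℝ (Fin 2)) R, W y s)‖) ≤ ε →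
    (∫ x3 in Ioo (0:ℝ) R, ∫ x in Metric.ball (0 : EuclideanSpace ℝ (Fin 2)) R,
        ‖deriv (W x) x3‖ ^ 2) ≤ ε * R →
    (1 / R ^ 3) * (∫ x3 in Ioo (0:ℝ) R,
        ∫ x in Metric.ball (0 : EuclideanSpace ℝ (Fin 2)) R,
          ‖W x x3 - (Real.pi * R ^ 3)⁻¹ • (∫ t3 in Ioo (0:ℝ) R,
            ∫ y in Metric.ball (0 : EuclideanSpace ℝ (Fin 2)) R, W y t3)‖) ≤
      C * (Real.sqrt ε + ε) := by
  refine ⟨2 * (√Real.pi + 1), by positivity, ?_⟩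
  intro m R s ε hR hs hε W hW hslice henergy
  set a := (Real.pi * R ^ 2)⁻¹ • ∫ y in Metric.ball 0 R, W y s
  have hWc : Continuous fun p : EuclideanSpace ℝ (Fin 2) × ℝ => W p.1 p.2 := hW.continuous
  have hDc : Continuous fun p : EuclideanSpace ℝ (Fin 2) × ℝ => deriv (W p.1) p.2 :=
    hW.continuous_deriv_slice
  rw [integral_cylinderMeasure (hDc.norm.pow 2)] at henergy
  rw [integral_cylinderMeasure hWc, ← cylinderMeasure_real_univ hR.le, ← average_eq,
    integral_cylinderMeasure (hWc.sub continuous_const).norm,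
    one_div, inv_mul_le_iff₀ (by positivity)]
  rw [one_div, inv_mul_le_iff₀ (by positivity), mul_comm] at hslice
  have hslicing : ∫ p, ‖W p.1 p.2 - a‖ ∂cylinderMeasure R ≤ (R - 0) *
      (∫ p, ‖deriv (W p.1) p.2‖ ∂cylinderMeasure R + ∫ x in Metric.ball 0 R, ‖W x s - a‖) :=
    integral_norm_sub_le_slice_add_deriv (F' := fun x t => deriv (W x) t) a
      (fun x t _ => (hW.hasDerivAt_slice x t).differentiableAt.hasDerivAt)
      (hDc.integrable_cylinderMeasure R)
      ((hWc.comp (continuous_id.prodMk continuous_const)).continuousOn.integrableOn_compact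
        (isCompact_closedBall 0 R) |>.mono_set Metric.ball_subset_closedBall) hs
  rw [sub_zero] at hslicing
  have hderiv := integral_norm_le_of_integral_sq_le_cylinderMeasure hDc hR.le henergy
  calc _ ≤ 2 * ∫ p, ‖W p.1 p.2 - a‖ ∂cylinderMeasure R :=
        integral_norm_sub_average_le_two_mul (hWc.integrable_cylinderMeasure R) a
    _ ≤ 2 * (R * (√Real.pi * √ε * R ^ 2 + ε * R ^ 2)) := by grw [hslicing, hderiv, hslice]
    _ = R ^ 3 * (2 * (√Real.pi * √ε + ε)) := by ring
    _ ≤ R ^ 3 * (2 * (√Real.pi + 1) * (√ε + ε)) := by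
        refine mul_le_mul_of_nonneg_left ?_ (by positivity)
        nlinarith [Real.sqrt_nonneg ε, Real.sqrt_nonneg Real.pi, hε.le]
end
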